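/- The integral ∫₀¹ t(1−t) ln(t) ln(1−t) dt equals (37 − 3π²)/108. -/

import Mathlib

/-!
Expanding `-log (1 - t) = ∑ tⁿ⁺¹ / (n + 1)` writes the integrand as a series of functions
`(tⁿ⁺³ - tⁿ⁺²) log t / (n + 1)` that are nonnegative on `(0, 1)`, so it can be integrated termwise.
Since `∫₀¹ tᵏ log t = -1 / (k + 1)²`, the integral is `∑ (1 / (n + 3)² - 1 / (n + 4)²) / (n + 1)`,
which partial fractions reduce to telescoping series and tails of `ζ(2) = π² / 6`.
-/

open Real MeasureTheory Set Filter Topology Finset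

theorem intervalIntegrable_pow_mul_log (n : ℕ) :
    IntervalIntegrable (fun t : ℝ => t ^ n * log t) volume 0 1 :=
  intervalIntegral.intervalIntegrable_log'.continuousOn_mul (continuous_pow n).continuousOn

theorem integral_pow_mul_log (n : ℕ) :
    ∫ t in (0 : ℝ)..1, t ^ n * log t = -1 / ((n : ℝ) + 1) ^ 2 := by
  set F : ℝ → ℝ := fun t => t ^ (n + 1) * log t / (n + 1) - t ^ (n + 1) / (n + 1) ^ 2
  have hF : ContinuousOn F (Icc 0 1) := by
    have : F = fun t => t ^ n * (t * log t) / (n + 1) - t ^ (n + 1) / (n + 1) ^ 2 := by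
      ext t; simp only [F]; ring
    rw [this]; fun_prop
  have hF' : ∀ t ∈ Ioo (0 : ℝ) 1, HasDerivAt F (t ^ n * log t) t := by
    intro t ht
    have hpow := hasDerivAt_pow (n + 1) t
    refine (((hpow.mul (hasDerivAt_log ht.1.ne')).div_const ((n : ℝ) + 1)).sub
      (hpow.div_const (((n : ℝ) + 1) ^ 2))).congr_deriv ?_
    field_simp [ht.1.ne']
    push_cast
    ring
  rw [intervalIntegral.integral_eq_sub_of_hasDerivAt_of_le zero_le_one hF hF'
    (intervalIntegrable_pow_mul_log n)]
  simp [F, div_eq_mul_inv]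

theorem hasSum_sub_succ_of_antitone {f : ℕ → ℝ} {l : ℝ} (hf : Antitone f)
    (hl : Tendsto f atTop (𝓝 l)) : HasSum (fun n => f n - f (n + 1)) (f 0 - l) := by
  rw [hasSum_iff_tendsto_nat_of_nonneg fun n => sub_nonneg.2 (hf n.le_succ)]
  simpa only [sum_range_sub'] using tendsto_const_nhds.sub hl

theorem hasSum_one_div_add_sub_one_div_add_one {a : ℝ} (ha : 0 < a) :
    HasSum (fun n : ℕ => 1 / (n + a) - 1 / (n + a + 1)) (1 / a) := by
  have hf : Antitone fun n : ℕ => 1 / (n + a) := fun m n hmn =>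
    one_div_le_one_div_of_le (by positivity) (by gcongr)
  have hl : Tendsto (fun n : ℕ => 1 / (n + a)) atTop (𝓝 0) :=
    tendsto_const_nhds.div_atTop (tendsto_atTop_add_const_right _ a tendsto_natCast_atTop_atTop)
  simpa [add_right_comm _ (1 : ℝ)] using hasSum_sub_succ_of_antitone hf hl

theorem hasSum_one_div_add_sub_one_div_add_nat {a : ℝ} (ha : 0 < a) (m : ℕ) :
    HasSum (fun n : ℕ => 1 / (n + a) - 1 / (n + a + m)) (∑ i ∈ range m, 1 / (a + i)) := by
  induction m with
  | zero => simp
  | succ m ih =>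
    rw [sum_range_succ]
    convert ih.add (hasSum_one_div_add_sub_one_div_add_one (a := a + m) (by positivity))
      using 1
    ext n; push_cast; ring

theorem hasSum_one_div_nat_add_sq (k : ℕ) :
    HasSum (fun n : ℕ => 1 / ((n : ℝ) + k + 1) ^ 2)
      (π ^ 2 / 6 - ∑ i ∈ range k, 1 / ((i : ℝ) + 1) ^ 2) := by
  have h := (hasSum_nat_add_iff' (k + 1)).2 hasSum_zeta_two
  rw [sum_range_succ'] at h
  simpa [add_assoc] using h

theorem hasSum_one_div_sq_sub_one_div_sq_div_succ :
    HasSum (fun n : ℕ => (1 / ((n : ℝ) + 3) ^ 2 - 1 / ((n : ℝ) + 4) ^ 2) / (n + 1))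
      (37 / 108 - π ^ 2 / 36) := by
  have h := (((hasSum_one_div_add_sub_one_div_add_nat one_pos 2).mul_left (1 / 4)).sub
    ((hasSum_one_div_add_sub_one_div_add_nat one_pos 3).mul_left (1 / 9))).sub
    ((hasSum_one_div_nat_add_sq 2).mul_left (1 / 2)) |>.add
    ((hasSum_one_div_nat_add_sq 3).mul_left (1 / 3))
  -- partial fractions: `1 / ((n + 1) (n + 3)²) = ¼ (1 / (n + 1) - 1 / (n + 3)) - ½ / (n + 3)²`
  -- and `1 / ((n + 1) (n + 4)²) = ⅑ (1 / (n + 1) - 1 / (n + 4)) - ⅓ / (n + 4)²`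
  have hpf := h.congr_fun (g := fun n : ℕ => (1 / ((n : ℝ) + 3) ^ 2 - 1 / ((n : ℝ) + 4) ^ 2) /
    (n + 1)) fun n => by push_cast; field_simp; ring
  refine (?_ : _ = (37 / 108 - π ^ 2 / 36 : ℝ)) ▸ hpf
  norm_num [sum_range_succ]
  ring

theorem continuous_mul_log_mul_log_one_sub :
    Continuous fun t : ℝ => t * (1 - t) * log t * log (1 - t) := by
  refine (continuous_mul_log.mul (continuous_mul_log.comp (continuous_sub_left 1))).congr
    fun t => ?_
  simp only [Pi.mul_apply, Function.comp_apply]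
  ring

theorem hasSum_integral_of_nonneg {α : Type*} [MeasurableSpace α] {μ : Measure α}
    {F : ℕ → α → ℝ} {f : α → ℝ} (hF : ∀ n, AEStronglyMeasurable (F n) μ)
    (hF_nonneg : ∀ n, 0 ≤ᵐ[μ] F n) (hf : Integrable f μ)
    (h : ∀ᵐ a ∂μ, HasSum (fun n => F n a) (f a)) :
    HasSum (fun n => ∫ a, F n a ∂μ) (∫ a, f a ∂μ) :=
  hasSum_integral_of_dominated_convergence F hF
    (fun n => (hF_nonneg n).mono fun _ ha => (Real.norm_of_nonneg ha).le)
    (h.mono fun _ ha => ha.summable) (hf.congr (h.mono fun _ ha => ha.tsum_eq.symm)) h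

theorem pow_sub_pow_mul_log_div_nonneg (n : ℕ) {t : ℝ} (ht₀ : 0 ≤ t) (ht₁ : t ≤ 1) :
    0 ≤ (t ^ (n + 3) - t ^ (n + 2)) * log t / (n + 1) :=
  div_nonneg (mul_nonneg_of_nonpos_of_nonpos
    (sub_nonpos.2 (pow_le_pow_of_le_one ht₀ ht₁ (by omega))) (log_nonpos ht₀ ht₁)) (by positivity)

theorem hasSum_mul_log_mul_log_one_sub {t : ℝ} (ht : |t| < 1) :
    HasSum (fun n : ℕ => (t ^ (n + 3) - t ^ (n + 2)) * log t / (n + 1))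
      (t * (1 - t) * log t * log (1 - t)) := by
  rw [show t * (1 - t) * log t * log (1 - t) = -(t * (1 - t) * log t) * -log (1 - t) by ring]
  exact ((hasSum_pow_div_log_of_abs_lt_one ht).mul_left _).congr_fun fun n => by ring

theorem integral_pow_sub_pow_mul_log_div (n : ℕ) :
    ∫ t in (0 : ℝ)..1, (t ^ (n + 3) - t ^ (n + 2)) * log t / (n + 1)
      = (1 / ((n : ℝ) + 3) ^ 2 - 1 / ((n : ℝ) + 4) ^ 2) / (n + 1) := by
  simp only [sub_mul]
  rw [intervalIntegral.integral_div, intervalIntegral.integral_sub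
    (intervalIntegrable_pow_mul_log _) (intervalIntegrable_pow_mul_log _),
    integral_pow_mul_log, integral_pow_mul_log]
  push_cast
  ring

/-- `∫₀¹ t(1−t) ln t ln(1−t) dt = (37 − 3π²)/108`. -/
theorem integral_mul_log_mul_log_one_sub :
    ∫ t in (0 : ℝ)..1, t * (1 - t) * Real.log t * Real.log (1 - t)
      = (37 - 3 * Real.pi ^ 2) / 108 := by
  have hseries := hasSum_integral_of_nonneg (μ := volume.restrict (Ioo (0 : ℝ) 1))
    (F := fun n t => (t ^ (n + 3) - t ^ (n + 2)) * log t / (n + 1))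
    (fun n => by fun_prop)
    (fun n => (ae_restrict_mem measurableSet_Ioo).mono fun t ht =>
      pow_sub_pow_mul_log_div_nonneg n ht.1.le ht.2.le)
    (continuous_mul_log_mul_log_one_sub.integrableOn_Icc.mono_set Ioo_subset_Icc_self)
    ((ae_restrict_mem measurableSet_Ioo).mono fun t ht =>
      hasSum_mul_log_mul_log_one_sub (abs_lt.2 ⟨by linarith [ht.1], ht.2⟩))
  simp only [← integral_Ioc_eq_integral_Ioo, ← intervalIntegral.integral_of_le zero_le_one,
    integral_pow_sub_pow_mul_log_div] at hseries
  rw [hseries.unique hasSum_one_div_sq_sub_one_div_sq_div_succ]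
  ring
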